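/- Z₂ order–disorder inequality: let ρ be a density matrix on a finite-dimensional complex space, let U be a Hermitian unitary matrix (U = U†, U² = 1), and let O be a unitary matrix anticommuting with U in the sense U O U† = −O. Then F(ρ, O ρ O†)² + |tr(ρ U)|² ≤ 1. -/

import Mathlib

/-!
With `X = √ρ`, the fidelity `F(ρ, OρO†)` is the trace norm of `X O X`. Let `Q = (1 - U)/2`, the
projection onto the `-1` eigenspace of `U`; anticommutation says that `O` exchanges `Q` and `1 - Q`.
Then `X O X = (X O Q)(Q X) + (X Q)(Q O X)`, and `‖B C‖₁ ≤ ‖B‖₂ ‖C‖₂` (the trace norm is attained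
as `Re tr (K A)` for a contraction `K`, then Cauchy–Schwarz) bounds `F` by `2 √(p q)` with
`p = tr ((1 - Q) ρ)` and `q = tr (Q ρ)`. As `p + q = 1` and `tr (ρ U) = p - q`,
`F² + |tr (ρ U)|² ≤ 4 p q + (p - q)² = 1`.
-/
noncomputable section

open scoped Matrix Kronecker ComplexOrder

/-- The positive semidefinite square root of a matrix (defaults to `0` if not PSD). -/
noncomputable def matSqrt {n : Type*} [Fintype n] [DecidableEq n] (M : Matrix n n ℂ) :
    Matrix n n ℂ :=
  open scoped Classical in
  if h : M.PosSemidef then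
    h.1.eigenvectorUnitary.1 * Matrix.diagonal ((↑) ∘ (Real.sqrt ∘ h.1.eigenvalues)) *
      (star h.1.eigenvectorUnitary : Matrix n n ℂ)
  else 0

/-- The fidelity `F(ρ, σ) = tr √(√ρ σ √ρ)` of two PSD matrices. -/
noncomputable def fidelity {n : Type*} [Fintype n] [DecidableEq n] (ρ σ : Matrix n n ℂ) : ℝ :=
  (matSqrt (matSqrt ρ * σ * matSqrt ρ)).trace.re

/-- The ℓ²→ℓ² operator norm of a complex matrix. -/
noncomputable def opNorm {m n : Type*} [Fintype m] [Fintype n] [DecidableEq n]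
    (M : Matrix m n ℂ) : ℝ :=
  ‖(Matrix.toEuclideanLin.trans LinearMap.toContinuousLinearMap) M‖

/-- Partial trace over the second tensor factor. -/
noncomputable def ptraceB {A B : Type*} [Fintype B]
    (ρ : Matrix (A × B) (A × B) ℂ) : Matrix A A ℂ :=
  Matrix.of fun a a' => ∑ b : B, ρ (a, b) (a', b)

open Matrix
open scoped MatrixOrder

theorem isStarProjection_half_smul_one_sub {A : Type*} [Ring A] [StarRing A] [Algebra ℂ A]
    [StarModule ℂ A] {u : A} (hu : IsSelfAdjoint u) (hu2 : u * u = 1) :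
    IsStarProjection ((2⁻¹ : ℂ) • (1 - u)) where
  isIdempotentElem := by
    rw [IsIdempotentElem, smul_mul_smul, sub_mul, mul_sub, mul_sub, hu2]
    simp only [one_mul, mul_one]
    module
  isSelfAdjoint := by
    rw [IsSelfAdjoint, star_smul, star_sub, star_one, hu.star_eq, Complex.star_def, map_inv₀,
      map_ofNat]

theorem mul_mul_star_eq_neg_of_mul_mul_star_eq_neg {R : Type*} [Ring R] [StarRing R]
    {u o : R} (hu : u ∈ unitary R) (ho : o ∈ unitary R) (h : u * o * star u = -o) :
    o * u * star o = -u := by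
  have hcomm : u * o = -(o * u) := by
    rw [← neg_mul, ← h, mul_assoc, mul_assoc, Unitary.star_mul_self_of_mem hu, mul_one]
  rw [← neg_eq_iff_eq_neg.mpr hcomm, neg_mul, mul_assoc, Unitary.mul_star_self_of_mem ho, mul_one]

theorem mul_eq_mul_one_sub_of_mul_mul_star_eq_one_sub {R : Type*} [Ring R] [StarRing R]
    {q o : R} (ho : o ∈ unitary R) (h : o * q * star o = 1 - q) : q * o = o * (1 - q) := by
  have hoq : o * q = (1 - q) * o := by
    rw [← h, mul_assoc _ (star o), Unitary.star_mul_self_of_mem ho, mul_one]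
  rw [mul_sub, mul_one, hoq, sub_mul, one_mul, sub_sub_cancel]

theorem star_mul_mul_eq_one_sub_of_mul_mul_star_eq_one_sub {R : Type*} [Ring R] [StarRing R]
    {q o : R} (ho : o ∈ unitary R) (h : o * q * star o = 1 - q) : star o * q * o = 1 - q := by
  rw [mul_assoc, mul_eq_mul_one_sub_of_mul_mul_star_eq_one_sub ho h, ← mul_assoc,
    Unitary.star_mul_self_of_mem ho, one_mul]

namespace Matrix

variable {n 𝕜 : Type*} [Fintype n] [DecidableEq n] [RCLike 𝕜]

theorem norm_trace_mul_conjTranspose_le (X Y : Matrix n n 𝕜) :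
    ‖(X * Yᴴ).trace‖ ≤ √(RCLike.re (X * Xᴴ).trace) * √(RCLike.re (Y * Yᴴ).trace) := by
  let := toMatrixSeminormedAddCommGroup (1 : Matrix n n 𝕜) PosSemidef.one
  let := toMatrixInnerProductSpace (1 : Matrix n n 𝕜) PosSemidef.one
  have h := norm_inner_le_norm (𝕜 := 𝕜) Y X
  rw [norm_eq_sqrt_re_inner (𝕜 := 𝕜) X, norm_eq_sqrt_re_inner (𝕜 := 𝕜) Y] at h
  change ‖(X * 1 * Yᴴ).trace‖ ≤ √(RCLike.re (Y * 1 * Yᴴ).trace) *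
    √(RCLike.re (X * 1 * Xᴴ).trace) at h
  simpa only [Matrix.mul_one, mul_comm (√(RCLike.re (Y * Yᴴ).trace))] using h

theorem re_trace_mul_mul_le_of_conjTranspose_mul_self_le_one {K : Matrix n n 𝕜}
    (hK : Kᴴ * K ≤ 1) (B C : Matrix n n 𝕜) :
    RCLike.re (K * B * C).trace ≤ √(RCLike.re (B * Bᴴ).trace) * √(RCLike.re (Cᴴ * C).trace) := by
  have hKB : RCLike.re (K * B * (K * B)ᴴ).trace ≤ RCLike.re (B * Bᴴ).trace := by
    have hgap : (B * Bᴴ).trace - (K * B * (K * B)ᴴ).trace = (Bᴴ * (1 - Kᴴ * K) * B).trace := by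
      have hcyc : (K * B * (K * B)ᴴ).trace = (Bᴴ * (Kᴴ * K) * B).trace := by
        rw [conjTranspose_mul, ← Matrix.mul_assoc, trace_mul_comm, ← Matrix.mul_assoc Kᴴ,
          trace_mul_comm]
        simp only [Matrix.mul_assoc]
      rw [hcyc, Matrix.mul_sub, Matrix.sub_mul, trace_sub, Matrix.mul_one, trace_mul_comm Bᴴ]
    have := (RCLike.nonneg_iff.mp (hK.conjTranspose_mul_mul_same B).trace_nonneg).1
    rw [← hgap, map_sub] at this
    linarith
  calc RCLike.re (K * B * C).trace ≤ ‖(K * B * Cᴴᴴ).trace‖ := by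
        rw [conjTranspose_conjTranspose]
        exact RCLike.re_le_norm _
    _ ≤ √(RCLike.re (K * B * (K * B)ᴴ).trace) * √(RCLike.re (Cᴴ * Cᴴᴴ).trace) :=
        norm_trace_mul_conjTranspose_le _ _
    _ ≤ √(RCLike.re (B * Bᴴ).trace) * √(RCLike.re (Cᴴ * C).trace) := by
        rw [conjTranspose_conjTranspose]
        gcongr

end Matrix

section MatSqrt

variable {n : Type*} [Fintype n] [DecidableEq n]

theorem Matrix.PosSemidef.matSqrt_eq_cfc {M : Matrix n n ℂ} (hM : M.PosSemidef) :
    matSqrt M = cfc Real.sqrt M := by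
  rw [matSqrt, dif_pos hM, hM.1.cfc_eq, IsHermitian.cfc, Unitary.conjStarAlgAut_apply]
  rfl

theorem posSemidef_matSqrt (M : Matrix n n ℂ) : (matSqrt M).PosSemidef := by
  by_cases hM : M.PosSemidef
  · rw [hM.matSqrt_eq_cfc, ← nonneg_iff_posSemidef]
    exact cfc_nonneg fun x _ ↦ Real.sqrt_nonneg x
  · rw [matSqrt, dif_neg hM]
    exact PosSemidef.zero

theorem Matrix.PosSemidef.matSqrt_mul_self {M : Matrix n n ℂ} (hM : M.PosSemidef) :
    matSqrt M * matSqrt M = M := by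
  rw [hM.matSqrt_eq_cfc, ← cfcₙ_eq_cfc, ← CFC.sqrt_eq_real_sqrt M hM.nonneg,
    CFC.sqrt_mul_sqrt_self M hM.nonneg]

theorem Matrix.PosSemidef.trace_mul_nonneg {M ρ : Matrix n n ℂ} (hM : M.PosSemidef)
    (hρ : ρ.PosSemidef) : 0 ≤ (M * ρ).trace := by
  have h := (hρ.mul_mul_conjTranspose_same (matSqrt M)).trace_nonneg
  rwa [(posSemidef_matSqrt M).1.eq, trace_mul_cycle, hM.matSqrt_mul_self] at h

theorem exists_contraction_trace_matSqrt_eq (A : Matrix n n ℂ) :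
    ∃ K : Matrix n n ℂ, Kᴴ * K ≤ 1 ∧ (matSqrt (A * Aᴴ)).trace = (K * A).trace := by
  have hS : IsSelfAdjoint (A * Aᴴ) := (posSemidef_self_mul_conjTranspose A).1.isSelfAdjoint
  have hcont (f : ℝ → ℝ) : ContinuousOn f (spectrum ℝ (A * Aᴴ)) :=
    (A * Aᴴ).finite_real_spectrum.continuousOn f
  -- `K = Aᴴ G` is the adjoint of the partial isometry `V` in the polar decomposition
  -- `A = √(A Aᴴ) V`: since `(√0)⁻¹ = 0`, `G` inverts `√(A Aᴴ)` on its range and kills its kernel.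
  set G := cfc (fun x : ℝ ↦ (√x)⁻¹) (A * Aᴴ)
  have hG : Gᴴ = G := (cfc_predicate (fun x : ℝ ↦ (√x)⁻¹) (A * Aᴴ)).star_eq
  refine ⟨Aᴴ * G, ?_, ?_⟩
  · have hKK : (Aᴴ * G)ᴴ * (Aᴴ * G) = cfc (fun x : ℝ ↦ (√x)⁻¹ * x * (√x)⁻¹) (A * Aᴴ) := by
      rw [cfc_mul _ _ _ (hcont _) (hcont _), cfc_mul _ _ _ (hcont _) (hcont _),
        cfc_id' ℝ (A * Aᴴ), conjTranspose_mul, conjTranspose_conjTranspose, hG]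
      simp only [Matrix.mul_assoc]
      rfl
    rw [hKK]
    refine cfc_le_one _ _ fun x _ ↦ ?_
    rw [inv_mul_eq_div, Real.div_sqrt, ← div_eq_mul_inv]
    exact div_self_le_one _
  · have hGS : G * (A * Aᴴ) = cfc Real.sqrt (A * Aᴴ) := by
      rw [← cfc_id' ℝ (A * Aᴴ), ← cfc_mul _ _ _ (hcont _) (hcont _), cfc_id' ℝ (A * Aᴴ)]
      congr 1
      funext x
      rw [inv_mul_eq_div, Real.div_sqrt]
    rw [(posSemidef_self_mul_conjTranspose A).matSqrt_eq_cfc, ← hGS, ← Matrix.mul_assoc,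
      trace_mul_comm, Matrix.mul_assoc]

theorem re_trace_matSqrt_le_of_eq_add_mul {A : Matrix n n ℂ} (B₁ C₁ B₂ C₂ : Matrix n n ℂ)
    (hA : A = B₁ * C₁ + B₂ * C₂) :
    (matSqrt (A * Aᴴ)).trace.re ≤
      √(B₁ * B₁ᴴ).trace.re * √(C₁ᴴ * C₁).trace.re +
        √(B₂ * B₂ᴴ).trace.re * √(C₂ᴴ * C₂).trace.re := by
  obtain ⟨K, hK, htr⟩ := exists_contraction_trace_matSqrt_eq A
  rw [htr, hA, Matrix.mul_add, trace_add, Complex.add_re, ← Matrix.mul_assoc,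
    ← Matrix.mul_assoc]
  exact add_le_add (re_trace_mul_mul_le_of_conjTranspose_mul_self_le_one hK B₁ C₁)
    (re_trace_mul_mul_le_of_conjTranspose_mul_self_le_one hK B₂ C₂)

end MatSqrt

section Fidelity

variable {n : Type*} [Fintype n] [DecidableEq n]

theorem fidelity_nonneg (ρ σ : Matrix n n ℂ) : 0 ≤ fidelity ρ σ :=
  (Complex.nonneg_iff.mp (posSemidef_matSqrt _).trace_nonneg).1

theorem fidelity_mul_conjTranspose (ρ B : Matrix n n ℂ) :
    fidelity ρ (B * Bᴴ) = (matSqrt (matSqrt ρ * B * (matSqrt ρ * B)ᴴ)).trace.re := by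
  rw [fidelity, conjTranspose_mul, (posSemidef_matSqrt ρ).1.eq]
  simp only [Matrix.mul_assoc]

theorem fidelity_conj_le_of_conj_eq_one_sub {ρ Q O : Matrix n n ℂ} (hρ : ρ.PosSemidef)
    (hQ : IsStarProjection Q) (hO : O ∈ unitaryGroup n ℂ) (hOQ : O * Q * Oᴴ = 1 - Q) :
    fidelity ρ (O * ρ * Oᴴ) ≤ 2 * (√((1 - Q) * ρ).trace.re * √(Q * ρ).trace.re) := by
  set X := matSqrt ρ
  have hX : Xᴴ = X := (posSemidef_matSqrt ρ).1.eq
  have hXX : X * X = ρ := hρ.matSqrt_mul_self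
  have hQh : Qᴴ = Q := hQ.isSelfAdjoint.star_eq
  have hQO : Q * O = O * (1 - Q) := mul_eq_mul_one_sub_of_mul_mul_star_eq_one_sub hO hOQ
  have hQQ (Y : Matrix n n ℂ) : Q * (Q * Y) = Q * Y := by
    rw [← Matrix.mul_assoc, hQ.isIdempotentElem.eq]
  have hOQO (Y : Matrix n n ℂ) : O * (Q * (Oᴴ * Y)) = (1 - Q) * Y := by
    rw [← hOQ]
    simp only [Matrix.mul_assoc]
  have hOQO' (Y : Matrix n n ℂ) : Oᴴ * (Q * (O * Y)) = (1 - Q) * Y := by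
    rw [← star_mul_mul_eq_one_sub_of_mul_mul_star_eq_one_sub hO hOQ]
    simp only [star_eq_conjTranspose, Matrix.mul_assoc]
  have htr (M : Matrix n n ℂ) : (X * (M * X)).trace = (M * ρ).trace := by
    rw [← Matrix.mul_assoc, trace_mul_cycle, hXX, trace_mul_comm]
  have hsplit : X * O * X = X * O * Q * (Q * X) + X * Q * (Q * O * X) := by
    simp only [Matrix.mul_assoc, hQQ]
    rw [← Matrix.mul_assoc Q, hQO, Matrix.mul_assoc O, ← Matrix.mul_add, ← Matrix.mul_add,
      ← Matrix.add_mul, add_sub_cancel, Matrix.one_mul]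
  have hfid : fidelity ρ (O * ρ * Oᴴ) = (matSqrt (X * O * X * (X * O * X)ᴴ)).trace.re := by
    have hconj : O * ρ * Oᴴ = O * X * (O * X)ᴴ := by
      rw [conjTranspose_mul, hX, ← hXX]
      simp only [Matrix.mul_assoc]
    rw [hconj, fidelity_mul_conjTranspose]
    simp only [Matrix.mul_assoc]
    rfl
  rw [hfid]
  refine (re_trace_matSqrt_le_of_eq_add_mul _ _ _ _ hsplit).trans_eq ?_
  simp only [conjTranspose_mul, hX, hQh, Matrix.mul_assoc, hQQ, hOQO, hOQO', htr]
  ring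

theorem fidelity_conj_sq_add_norm_sub_sq_le {ρ Q O : Matrix n n ℂ} (hρ : ρ.PosSemidef)
    (hQ : IsStarProjection Q) (hO : O ∈ unitaryGroup n ℂ) (hOQ : O * Q * Oᴴ = 1 - Q) :
    fidelity ρ (O * ρ * Oᴴ) ^ 2 + ‖((1 - Q) * ρ).trace - (Q * ρ).trace‖ ^ 2 ≤ ‖ρ.trace‖ ^ 2 := by
  have hF := fidelity_conj_le_of_conj_eq_one_sub hρ hQ hO hOQ
  have hF0 := fidelity_nonneg ρ (O * ρ * Oᴴ)
  have hsum : ((1 - Q) * ρ).trace + (Q * ρ).trace = ρ.trace := by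
    rw [← trace_add, ← Matrix.add_mul, sub_add_cancel, Matrix.one_mul]
  obtain ⟨hp, hp'⟩ := Complex.nonneg_iff.mp
    ((nonneg_iff_posSemidef.mp hQ.one_sub_nonneg).trace_mul_nonneg hρ)
  obtain ⟨hq, hq'⟩ := Complex.nonneg_iff.mp
    ((nonneg_iff_posSemidef.mp hQ.nonneg).trace_mul_nonneg hρ)
  rw [← hsum]
  generalize ((1 - Q) * ρ).trace = a at *
  generalize (Q * ρ).trace = b at *
  simp only [Complex.sq_norm, Complex.normSq_apply, Complex.sub_re, Complex.sub_im,
    Complex.add_re, Complex.add_im, ← hp', ← hq']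
  nlinarith [Real.sq_sqrt hp, Real.sq_sqrt hq]

end Fidelity

/-- **Z₂ order–disorder inequality**: `F(ρ, OρO†)² + |tr(ρU)|² ≤ 1` for a Hermitian unitary `U`
and a unitary `O` anticommuting with `U`. -/
theorem z2_order_disorder_inequality
    {n : Type*} [Fintype n] [DecidableEq n]
    (ρ : Matrix n n ℂ) (hρ : ρ.PosSemidef) (hρtr : ρ.trace = 1)
    (U : Matrix n n ℂ) (hU : U ∈ Matrix.unitaryGroup n ℂ) (hUherm : U = Uᴴ)
    (O : Matrix n n ℂ) (hO : O ∈ Matrix.unitaryGroup n ℂ)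
    (hanti : U * O * Uᴴ = -O) :
    fidelity ρ (O * ρ * Oᴴ) ^ 2 + ‖(ρ * U).trace‖ ^ 2 ≤ 1 := by
  have hU2 : U * U = 1 := by
    nth_rewrite 1 [hUherm]
    exact mem_unitaryGroup_iff'.mp hU
  set Q : Matrix n n ℂ := (2⁻¹ : ℂ) • (1 - U)
  have hOO : O * Oᴴ = 1 := mem_unitaryGroup_iff.mp hO
  have hOUO : O * U * Oᴴ = -U := mul_mul_star_eq_neg_of_mul_mul_star_eq_neg hU hO hanti
  have hOQ : O * Q * Oᴴ = 1 - Q := by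
    rw [Matrix.mul_smul, Matrix.smul_mul, Matrix.mul_sub, Matrix.sub_mul, Matrix.mul_one, hOO,
      hOUO]
    module
  have hρU : (ρ * U).trace = ((1 - Q) * ρ).trace - (Q * ρ).trace := by
    rw [← trace_sub, ← Matrix.sub_mul, trace_mul_comm]
    congr 2
    module
  have h := fidelity_conj_sq_add_norm_sub_sq_le hρ
    (isStarProjection_half_smul_one_sub hUherm.symm hU2) hO hOQ
  rwa [← hρU, hρtr, norm_one, one_pow] at h
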